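/- arXiv:1401.7569 — 6 statements merged into one kernel-verified Lean document; each statement's English description precedes it below -/
import Mathlib

section
/- For any nonzero vectors p, q in a Euclidean space, letting p̂ = p/|p| and q̂ = q/|q|, we have |p̂ - ⟨p̂, q̂⟩ q̂| ≤ |p - q|/|q|. -/
/-! With `û = ‖p‖⁻¹ • p` and `v̂ = ‖q‖⁻¹ • q`, both `‖û - ⟪û, v̂⟫ v̂‖` and `‖v̂ - ⟪v̂, û⟫ û‖` equal
`√(1 - ⟪û, v̂⟫²)`, the sine of the angle between `p` and `q`. Scaled by `‖q‖`, the second one is the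
distance from `q` to the line `ℝ p`, which is at most `‖q - p‖` because `p` lies on that line. -/

open Set Metric Filter
open scoped ENNReal Topology Classical

noncomputable section

variable {E : Type*} [NormedAddCommGroup E] [InnerProductSpace ℝ E]

/-- The (possibly set-valued) nearest-point projection of `y` onto `X`. -/
def projSet (X : Set E) (y : E) : Set E := {x | x ∈ X ∧ dist y x = Metric.infDist y X}

/-- The proximal normal cone to `X` at `x`. -/
def proxNormalCone (X : Set E) (x : E) : Set E :=
  {v | ∃ (l : ℝ) (u : E), 0 ≤ l ∧ v = l • u ∧ x ∈ projSet X (x + u)}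

/-- The limiting normal cone to `X` at `x`. -/
def limNormalCone (X : Set E) (x : E) : Set E :=
  {v | ∃ xs vs : ℕ → E, (∀ n, vs n ∈ proxNormalCone X (xs n)) ∧ (∀ n, xs n ∈ X) ∧
    Tendsto xs atTop (𝓝 x) ∧ Tendsto vs atTop (𝓝 v)}

/-- The slope `|∇f|(x)`. -/
def slop {M : Type*} [MetricSpace M] (f : M → EReal) (x : M) : ℝ≥0∞ :=
  Filter.limsup (fun w => ENNReal.ofReal ((f x - f w).toReal / dist x w)) (𝓝[≠] x)

/-- The limiting slope. -/
def limSlope {M : Type*} [MetricSpace M] (f : M → EReal) (x : M) : ℝ≥0∞ :=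
  Filter.liminf (slop f) (𝓝 x ⊓ Filter.comap f (𝓝 (f x)))

/-- The proximal subdifferential. -/
def proxSubdiff (f : E → EReal) (x : E) : Set E :=
  {v | ∃ r > (0:ℝ), ∀ᶠ w in 𝓝 x,
    f x + (((inner ℝ v (w - x) : ℝ) - r * ‖w - x‖ ^ 2 : ℝ) : EReal) ≤ f w}

/-- The limiting subdifferential. -/
def limSubdiff (f : E → EReal) (x : E) : Set E :=
  {v | ∃ xs vs : ℕ → E, (∀ n, vs n ∈ proxSubdiff f (xs n)) ∧
    Tendsto xs atTop (𝓝 x) ∧ Tendsto (fun n => f (xs n)) atTop (𝓝 (f x)) ∧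
    Tendsto vs atTop (𝓝 v)}

/-- Extended-real-valued indicator function of a set. -/
def eindicator {α : Type*} (X : Set α) (w : α) : EReal := if w ∈ X then 0 else ⊤

/-- Intrinsic transversality (with proximal normal cones). -/
def IntrinsicallyTransversal (X Y : Set E) (z : E) (κ : ℝ) : Prop :=
  ∃ Z ∈ 𝓝 z, ∀ x ∈ X ∩ Yᶜ ∩ Z, ∀ y ∈ Y ∩ Xᶜ ∩ Z,
    κ ≤ max (Metric.infDist (‖x - y‖⁻¹ • (x - y)) (proxNormalCone Y y))
            (Metric.infDist (‖x - y‖⁻¹ • (x - y)) (-(proxNormalCone X x)))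

/-- Strong intrinsic transversality (with limiting normal cones). -/
def StrongIntrinsicallyTransversal (X Y : Set E) (z : E) (κ : ℝ) : Prop :=
  ∃ Z ∈ 𝓝 z, ∀ x ∈ X ∩ Yᶜ ∩ Z, ∀ y ∈ Y ∩ Xᶜ ∩ Z,
    κ ≤ max (Metric.infDist (‖x - y‖⁻¹ • (x - y)) (limNormalCone Y y))
            (Metric.infDist (‖x - y‖⁻¹ • (x - y)) (-(limNormalCone X x)))

/-- Strict intrinsic transversality (with slopes of the coupling function marginals). -/
def StrictIntrinsicallyTransversal (X Y : Set E) (z : E) (κ : ℝ) : Prop :=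
  ∃ Z ∈ 𝓝 z, ∀ x ∈ X ∩ Yᶜ ∩ Z, ∀ y ∈ Y ∩ Xᶜ ∩ Z,
    ENNReal.ofReal κ ≤ max (slop (fun w => (‖w - y‖ : EReal) + eindicator X w) x)
                           (slop (fun w => (‖x - w‖ : EReal) + eindicator Y w) y)

/-- Super-regularity of a set at a point. -/
def SuperRegular (X : Set E) (z : E) : Prop :=
  ∀ δ > (0:ℝ), ∃ r > (0:ℝ), ∀ w ∈ X ∩ ball z r, ∀ x ∈ X ∩ ball z r, w ≠ x →
    ∀ v ∈ limNormalCone X x, v ≠ 0 →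
      Real.pi / 2 - δ ≤ InnerProductGeometry.angle (w - x) v

/-- Inherent transversality (via restricted normal cones, Bauschke–Luke–Phan–Wang). -/
def InherentlyTransversal (X Y : Set E) (z : E) : Prop :=
  ∃ ε > (0:ℝ), ∃ Z ∈ 𝓝 z, ∀ x ∈ X ∩ Yᶜ ∩ Z, ∀ y ∈ Y ∩ Xᶜ ∩ Z,
    ∀ p ∈ projSet Y x, ∀ w ∈ projSet X y,
      ε ≤ InnerProductGeometry.angle (x - p) (w - y)

/-- Semi-algebraic subsets of `ℝⁿ`: finite unions of sets defined by finitely many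
polynomial equalities and strict inequalities. -/
def IsSemialgebraic {n : ℕ} (s : Set (EuclideanSpace ℝ (Fin n))) : Prop :=
  ∃ (m : ℕ) (t : Fin m → Set (EuclideanSpace ℝ (Fin n))),
    (∀ i, ∃ (k : ℕ) (p q : Fin k → MvPolynomial (Fin n) ℝ),
      t i = {x | (∀ j, MvPolynomial.eval (fun a => x a) (p j) = 0) ∧
                 (∀ j, 0 < MvPolynomial.eval (fun a => x a) (q j))}) ∧
    s = ⋃ i, t i

end

section ProjectionOnUnitVector

variable {F : Type*} [NormedAddCommGroup F] [InnerProductSpace ℝ F]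

open scoped RealInnerProductSpace

theorem norm_sub_inner_smul_sq {u : F} (hu : ‖u‖ = 1) (x : F) :
    ‖x - ⟪x, u⟫ • u‖ ^ 2 = ‖x‖ ^ 2 - ⟪x, u⟫ ^ 2 := by
  rw [norm_sub_sq_real, real_inner_smul_right, norm_smul, hu, Real.norm_eq_abs,
    mul_one, sq_abs]
  ring

theorem norm_sub_inner_smul_comm {u v : F} (hu : ‖u‖ = 1) (hv : ‖v‖ = 1) :
    ‖u - ⟪u, v⟫ • v‖ = ‖v - ⟪v, u⟫ • u‖ := by
  rw [← sq_eq_sq₀ (norm_nonneg _) (norm_nonneg _), norm_sub_inner_smul_sq hv,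
    norm_sub_inner_smul_sq hu, hu, hv, real_inner_comm]

theorem norm_smul_sub_inner_smul (c : ℝ) (x u : F) :
    ‖c • x - ⟪c • x, u⟫ • u‖ = |c| * ‖x - ⟪x, u⟫ • u‖ := by
  rw [real_inner_smul_left, mul_smul, ← smul_sub, norm_smul, Real.norm_eq_abs]

theorem norm_sub_inner_smul_le {u : F} (hu : ‖u‖ = 1) (x : F) (t : ℝ) :
    ‖x - ⟪x, u⟫ • u‖ ≤ ‖x - t • u‖ := by
  rw [real_inner_comm, ← Submodule.starProjection_unit_singleton ℝ hu,
    Submodule.starProjection_minimal]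
  exact ciInf_le ⟨0, Set.forall_mem_range.mpr fun _ => norm_nonneg _⟩
    (⟨t • u, Submodule.smul_mem _ t (Submodule.mem_span_singleton_self u)⟩ : ℝ ∙ u)

end ProjectionOnUnitVector

theorem norm_normalized_sub_inner_smul_le {E : Type*} [NormedAddCommGroup E]
    [InnerProductSpace ℝ E] (p q : E) (hp : p ≠ 0) (hq : q ≠ 0) :
    ‖‖p‖⁻¹ • p - (inner ℝ (‖p‖⁻¹ • p) (‖q‖⁻¹ • q) : ℝ) • (‖q‖⁻¹ • q)‖ ≤ ‖p - q‖ / ‖q‖ := by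
  set u := ‖p‖⁻¹ • p
  have hu : ‖u‖ = 1 := norm_smul_inv_norm hp
  have hp_eq : ‖p‖ • u = p := smul_inv_smul₀ (norm_ne_zero_iff.mpr hp) p
  calc ‖u - (inner ℝ u (‖q‖⁻¹ • q) : ℝ) • (‖q‖⁻¹ • q)‖
      = ‖‖q‖⁻¹ • q - (inner ℝ (‖q‖⁻¹ • q) u : ℝ) • u‖ :=
        norm_sub_inner_smul_comm hu (norm_smul_inv_norm hq)
    _ = ‖q‖⁻¹ * ‖q - (inner ℝ q u : ℝ) • u‖ := by
        rw [norm_smul_sub_inner_smul, abs_of_nonneg (by positivity)]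
    _ ≤ ‖q‖⁻¹ * ‖q - ‖p‖ • u‖ := by gcongr; exact norm_sub_inner_smul_le hu q _
    _ = ‖p - q‖ / ‖q‖ := by rw [hp_eq, norm_sub_rev, inv_mul_eq_div]
end

section
/- (Error bound via slope) Let f : E → ℝ ∪ {+∞} be lower semicontinuous and finite at x, and let δ > 0 and α < f(x) be constants such that K := inf{|∇f|(w) : α < f(w) ≤ f(x), |w - x| ≤ δ} > (f(x) - α)/δ. Then the level set [f ≤ α] = {u : f(u) ≤ α} is nonempty and d(x, [f ≤ α]) ≤ (f(x) - α)/K. -/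
open Set Metric Filter
open scoped ENNReal Topology Classical

/-!
Clamping `f` to `[α, f x]` gives a bounded lower semicontinuous real function `G`, to which
Ekeland's variational principle applies with any parameter `ε` between `(f x - α) / δ` and `K`.
The Ekeland point `y` improves on `x`, so `ε · d(x, y) ≤ f x - α < ε δ`, and no point improves
on `y`, so `f`, which lies above `G` near `y` and agrees with it at `y` when `α < f y ≤ f x`,
decreases from `y` at rate at most `ε`. Hence `|∇f|(y) ≤ ε < K` forces `f y ≤ α`, and letting
`ε ↑ K` gives the bound.
-/

section Ekeland

variable {M : Type*} [MetricSpace M] {G : M → ℝ} {ε : ℝ}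

def ekelandSet (G : M → ℝ) (ε : ℝ) (w : M) : Set M := {u | G u + ε * dist w u ≤ G w}

lemma mem_ekelandSet_self (w : M) : w ∈ ekelandSet G ε w := by
  simp [ekelandSet]

lemma le_of_mem_ekelandSet (hε : 0 ≤ ε) {w u : M} (hu : u ∈ ekelandSet G ε w) : G u ≤ G w := by
  have := mul_nonneg hε (dist_nonneg (x := w) (y := u))
  simp only [ekelandSet, mem_ofPred_eq] at hu
  linarith

lemma ekelandSet_trans (hε : 0 ≤ ε) {w u v : M} (hu : u ∈ ekelandSet G ε w)
    (hv : v ∈ ekelandSet G ε u) : v ∈ ekelandSet G ε w := by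
  simp only [ekelandSet, mem_ofPred_eq] at *
  nlinarith [dist_triangle w u v]

lemma LowerSemicontinuous.isClosed_ekelandSet (hG : LowerSemicontinuous G) (w : M) :
    IsClosed (ekelandSet G ε w) :=
  (hG.add (continuous_const.mul (continuous_const.dist continuous_id)).lowerSemicontinuous)
    |>.isClosed_preimage (G w)

lemma mem_ekelandSet_of_le (hε : 0 ≤ ε) {s : ℕ → M} (hs : ∀ n, s (n + 1) ∈ ekelandSet G ε (s n))
    {n k : ℕ} (hnk : n ≤ k) : s k ∈ ekelandSet G ε (s n) := by
  induction k, hnk using Nat.le_induction with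
  | base => exact mem_ekelandSet_self _
  | succ k _ ih => exact ekelandSet_trans hε ih (hs k)

/-- Along an Ekeland chain, distances are controlled by the decrease of `G`, which converges. -/
lemma cauchySeq_of_mem_ekelandSet (hε : 0 < ε) {s : ℕ → M}
    (hs : ∀ n, s (n + 1) ∈ ekelandSet G ε (s n)) (hbdd : BddBelow (range (G ∘ s))) :
    CauchySeq s := by
  have hanti : Antitone (G ∘ s) :=
    antitone_nat_of_succ_le fun n => le_of_mem_ekelandSet (G := G) hε.le (hs n)
  have hG : CauchySeq (G ∘ s) := (tendsto_atTop_ciInf hanti hbdd).cauchySeq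
  rw [Metric.cauchySeq_iff'] at hG ⊢
  intro η hη
  obtain ⟨N, hN⟩ := hG (ε * η) (mul_pos hε hη)
  refine ⟨N, fun n hn => ?_⟩
  have hmem := mem_ekelandSet_of_le hε.le hs hn
  have hdec := hN n hn
  simp only [ekelandSet, mem_ofPred_eq] at hmem
  simp only [Function.comp, Real.dist_eq, abs_lt] at hdec
  rw [dist_comm]
  nlinarith

theorem LowerSemicontinuous.exists_ekeland [CompleteSpace M] (hG : LowerSemicontinuous G)
    (hbdd : BddBelow (range G)) (hε : 0 < ε) (x : M) :
    ∃ y ∈ ekelandSet G ε x, ∀ u ∈ ekelandSet G ε y, u = y := by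
  have hnear : ∀ (w : M) (n : ℕ), ∃ u ∈ ekelandSet G ε w,
      G u < sInf (G '' ekelandSet G ε w) + 1 / (n + 1) := by
    intro w n
    obtain ⟨_, ⟨u, hu, rfl⟩, hlt⟩ := Real.lt_sInf_add_pos
      ⟨G w, mem_image_of_mem G (mem_ekelandSet_self w)⟩ Nat.one_div_pos_of_nat
    exact ⟨u, hu, hlt⟩
  choose next hnext_mem hnext_lt using hnear
  let s : ℕ → M := fun n => Nat.rec x (fun k w => next w k) n
  have hs : ∀ n, s (n + 1) ∈ ekelandSet G ε (s n) := fun n => hnext_mem _ _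
  obtain ⟨y, hy⟩ := cauchySeq_tendsto_of_complete
    (cauchySeq_of_mem_ekelandSet hε hs (hbdd.mono (range_comp_subset_range s G)))
  have hy_mem : ∀ n, y ∈ ekelandSet G ε (s n) := fun n =>
    (hG.isClosed_ekelandSet (s n)).mem_of_tendsto hy
      (eventually_atTop.2 ⟨n, fun k hk => mem_ekelandSet_of_le hε.le hs hk⟩)
  refine ⟨y, hy_mem 0, fun u hu => ?_⟩
  -- `u` improves on every `s n` as well, and `s (n + 1)` nearly minimises `G` among those points.
  have hsmall : ∀ n : ℕ, ε * dist y u ≤ 1 / (n + 1) := by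
    intro n
    have hinf : sInf (G '' ekelandSet G ε (s n)) ≤ G u :=
      csInf_le (hbdd.mono (image_subset_range _ _))
        (mem_image_of_mem G (ekelandSet_trans hε.le (hy_mem n) hu))
    have hnext : G (s (n + 1)) < sInf (G '' ekelandSet G ε (s n)) + 1 / (n + 1) :=
      hnext_lt (s n) n
    have hy_le := le_of_mem_ekelandSet hε.le (hy_mem (n + 1))
    simp only [ekelandSet, mem_ofPred_eq] at hu
    linarith
  have hzero : ε * dist y u ≤ 0 := ge_of_tendsto' tendsto_one_div_add_atTop_nhds_zero_nat hsmall
  exact (dist_le_zero.1 (nonpos_of_mul_nonpos_right hzero hε)).symm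

end Ekeland

section Clamp

variable {α a : ℝ}

/-- The clamped value is finite when `α ≤ a`, so `toReal` loses nothing. -/
noncomputable def clampToReal (α a : ℝ) (t : EReal) : ℝ := (min (max t α) a).toReal

lemma coe_clampToReal (h : α ≤ a) (t : EReal) :
    (clampToReal α a t : EReal) = min (max t α) a :=
  EReal.coe_toReal (ne_top_of_le_ne_top (EReal.coe_ne_top a) (min_le_right _ _))
    (ne_bot_of_le_ne_bot (EReal.coe_ne_bot α)
      (le_min (le_max_right _ _) (EReal.coe_le_coe_iff.2 h)))

lemma clampToReal_mem_Icc (h : α ≤ a) (t : EReal) : clampToReal α a t ∈ Icc α a := by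
  constructor <;> rw [← EReal.coe_le_coe_iff, coe_clampToReal h]
  · exact le_min (le_max_right _ _) (EReal.coe_le_coe_iff.2 h)
  · exact min_le_right _ _

lemma coe_clampToReal_of_mem_Icc (h : α ≤ a) {t : EReal} (hαt : α ≤ t) (hta : t ≤ a) :
    (clampToReal α a t : EReal) = t := by
  rw [coe_clampToReal h, max_eq_left hαt, min_eq_left hta]

lemma clampToReal_of_le (h : α ≤ a) {t : EReal} (hat : a ≤ t) : clampToReal α a t = a := by
  rw [← EReal.coe_eq_coe_iff, coe_clampToReal h,
    max_eq_left ((EReal.coe_le_coe_iff.2 h).trans hat), min_eq_right hat]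

lemma clampToReal_le_toReal (h : α ≤ a) {t : EReal} (hαt : α ≤ t) (ht : t ≠ ⊤) :
    clampToReal α a t ≤ t.toReal := by
  rw [← EReal.coe_le_coe_iff, coe_clampToReal h, max_eq_left hαt,
    EReal.coe_toReal ht (ne_bot_of_le_ne_bot (EReal.coe_ne_bot α) hαt)]
  exact min_le_left _ _

lemma monotone_clampToReal (h : α ≤ a) : Monotone (clampToReal α a) := fun s t hst => by
  rw [← EReal.coe_le_coe_iff, coe_clampToReal h, coe_clampToReal h]
  gcongr

lemma continuous_clampToReal (h : α ≤ a) : Continuous (clampToReal α a) :=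
  EReal.continuousOn_toReal.comp_continuous (by fun_prop) fun t => by
    rw [← coe_clampToReal h t]
    simp

lemma LowerSemicontinuous.clampToReal {M : Type*} [TopologicalSpace M] {f : M → EReal}
    (hf : LowerSemicontinuous f) (h : α ≤ a) : LowerSemicontinuous (clampToReal α a ∘ f) :=
  (continuous_clampToReal h).comp_lowerSemicontinuous hf (monotone_clampToReal h)

end Clamp

lemma slop_le_ofReal {M : Type*} [MetricSpace M] {f : M → EReal} {y : M} {ε : ℝ}
    (h : ∀ᶠ u in 𝓝[≠] y, (f y - f u).toReal ≤ ε * dist y u) : slop f y ≤ ENNReal.ofReal ε := by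
  refine limsup_le_of_le (by isBoundedDefault) ?_
  filter_upwards [h, self_mem_nhdsWithin] with u hu hne
  exact ENNReal.ofReal_le_ofReal ((div_le_iff₀ (dist_pos.2 (Ne.symm hne))).2 hu)

lemma ENNReal.le_div_of_forall_mul_le {b K d r : ℝ≥0∞} (hbK : b < K) (hr : r ≠ ∞)
    (h : ∀ c ∈ Ioo b K, d * c ≤ r) : d ≤ r / K := by
  rw [ENNReal.le_div_iff_mul_le (Or.inl (bot_le.trans_lt hbK).ne') (Or.inr hr)]
  refine ENNReal.mul_le_of_forall_lt fun d' hd' K' hK' => ?_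
  obtain ⟨c, hc, hcK⟩ := exists_between (max_lt hK' hbK)
  calc d' * K' ≤ d * c := mul_le_mul' hd'.le ((le_max_left _ _).trans hc.le)
    _ ≤ r := h c ⟨(le_max_right _ _).trans_lt hc, hcK⟩

theorem exists_le_of_lt_slop {M : Type*} [MetricSpace M] [CompleteSpace M] {f : M → EReal}
    (hf : LowerSemicontinuous f) {x : M} {a α ε : ℝ} (hfx : f x = a) (hα : α < a) (hε : 0 < ε)
    (hslope : ∀ w, (α : EReal) < f w → f w ≤ a → dist w x ≤ (a - α) / ε →
      ENNReal.ofReal ε < slop f w) :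
    ∃ y, f y ≤ α ∧ dist x y ≤ (a - α) / ε := by
  set G := clampToReal α a ∘ f
  have hGx : G x = a := clampToReal_of_le hα.le hfx.ge
  obtain ⟨y, hxy, hmin⟩ := (hf.clampToReal hα.le).exists_ekeland
    ⟨α, by rintro _ ⟨w, rfl⟩; exact (clampToReal_mem_Icc hα.le (f w)).1⟩ hε x
  change G y + ε * dist x y ≤ G x at hxy
  rw [hGx] at hxy
  have hdist : dist x y ≤ (a - α) / ε := by
    have hαGy : α ≤ G y := (clampToReal_mem_Icc hα.le (f y)).1
    rw [le_div_iff₀ hε]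
    linarith
  refine ⟨y, not_lt.1 fun hfy => ?_, hdist⟩
  have hfya : f y ≤ a := by
    refine le_of_not_gt fun hay => hay.ne' ?_
    have hGy : G y = a := clampToReal_of_le hα.le hay.le
    have hyx : y = x := (dist_le_zero.1 (nonpos_of_mul_nonpos_right (by linarith) hε)).symm
    rw [hyx, hfx]
  have hGy : (G y : EReal) = f y := coe_clampToReal_of_mem_Icc hα.le hfy.le hfya
  have hGy_le : ∀ u, G y ≤ G u + ε * dist y u := fun u => by
    by_cases hu : u ∈ ekelandSet G ε y
    · rw [hmin u hu, dist_self, mul_zero, add_zero]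
    · exact (not_le.1 hu).le
  have hslope_y : slop f y ≤ ENNReal.ofReal ε := by
    refine slop_le_ofReal ?_
    filter_upwards [nhdsWithin_le_nhds (hf y α hfy)] with u hu
    rcases eq_or_ne (f u) ⊤ with htop | htop
    · rw [htop, EReal.sub_top, EReal.toReal_bot]
      positivity
    · have hGu : G u ≤ (f u).toReal := clampToReal_le_toReal hα.le hu.le htop
      rw [← hGy, ← EReal.coe_toReal htop (ne_bot_of_le_ne_bot (EReal.coe_ne_bot α) hu.le),
        ← EReal.coe_sub, EReal.toReal_coe]
      linarith [hGy_le u]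
  exact (hslope y hfy hfya (dist_comm x y ▸ hdist)).not_ge hslope_y

theorem error_bound_via_slope_general {M : Type*} [MetricSpace M] [CompleteSpace M]
    (f : M → EReal) (hlsc : LowerSemicontinuous f)
    (x : M) (a : ℝ) (hfx : f x = (a : EReal)) (δ : ℝ) (hδ : 0 < δ) (α : ℝ) (hα : α < a)
    (hK : ENNReal.ofReal ((a - α) / δ) <
      ⨅ w ∈ {w : M | (α : EReal) < f w ∧ f w ≤ f x ∧ dist w x ≤ δ}, slop f w) :
    {u : M | f u ≤ (α : EReal)}.Nonempty ∧
      EMetric.infEdist x {u : M | f u ≤ (α : EReal)} ≤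
        ENNReal.ofReal (a - α) /
          ⨅ w ∈ {w : M | (α : EReal) < f w ∧ f w ≤ f x ∧ dist w x ≤ δ}, slop f w := by
  set K := ⨅ w ∈ {w : M | (α : EReal) < f w ∧ f w ≤ f x ∧ dist w x ≤ δ}, slop f w
  have key : ∀ c ∈ Ioo (ENNReal.ofReal ((a - α) / δ)) K,
      ∃ y, f y ≤ α ∧ edist x y * c ≤ ENNReal.ofReal (a - α) := by
    rintro c ⟨hbc, hcK⟩
    have hc : c ≠ ⊤ := hcK.ne_top
    have hδc : (a - α) / δ < c.toReal :=
      (ENNReal.ofReal_lt_iff_lt_toReal (div_pos (sub_pos.2 hα) hδ).le hc).1 hbc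
    have hcpos : 0 < c.toReal := (div_pos (sub_pos.2 hα) hδ).trans hδc
    have hradius : (a - α) / c.toReal < δ := by
      rw [div_lt_iff₀ hcpos]
      rw [div_lt_iff₀ hδ] at hδc
      linarith
    obtain ⟨y, hy, hxy⟩ := exists_le_of_lt_slop hlsc hfx hα hcpos fun w hαw hwa hwx => by
      rw [ENNReal.ofReal_toReal hc]
      exact hcK.trans_le (iInf₂_le w ⟨hαw, hfx ▸ hwa, hwx.trans hradius.le⟩)
    refine ⟨y, hy, ?_⟩
    rw [edist_dist, ← ENNReal.ofReal_toReal hc, ← ENNReal.ofReal_mul dist_nonneg]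
    exact ENNReal.ofReal_le_ofReal ((le_div_iff₀ hcpos).1 hxy)
  obtain ⟨y, hy, -⟩ := key _ (exists_between hK).choose_spec
  refine ⟨⟨y, hy⟩, ENNReal.le_div_of_forall_mul_le hK ENNReal.ofReal_ne_top fun c hc => ?_⟩
  obtain ⟨y, hy, hyc⟩ := key c hc
  calc Metric.infEDist x {u : M | f u ≤ (α : EReal)} * c ≤ edist x y * c := by
        gcongr
        exact Metric.infEDist_le_edist_of_mem hy
    _ ≤ _ := hyc

theorem error_bound_via_slope {M : Type*} [MetricSpace M] [CompleteSpace M]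
    (f : M → EReal) (hlsc : LowerSemicontinuous f) (hbot : ∀ w, f w ≠ ⊥)
    (x : M) (a : ℝ) (hfx : f x = (a : EReal)) (δ : ℝ) (hδ : 0 < δ) (α : ℝ) (hα : α < a)
    (hK : ENNReal.ofReal ((a - α) / δ) <
      ⨅ w ∈ {w : M | (α : EReal) < f w ∧ f w ≤ f x ∧ dist w x ≤ δ}, slop f w) :
    {u : M | f u ≤ (α : EReal)}.Nonempty ∧
      EMetric.infEdist x {u : M | f u ≤ (α : EReal)} ≤
        ENNReal.ofReal (a - α) /
          ⨅ w ∈ {w : M | (α : EReal) < f w ∧ f w ≤ f x ∧ dist w x ≤ δ}, slop f w :=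
  error_bound_via_slope_general f hlsc x a hfx δ hδ α hα hK
end

section
/- (Distance decrease) Let X ⊂ E be closed, x ∈ X, y ∉ X, and ρ = |y - x|. Given δ > 0, suppose μ := inf{ d( (y-w)/|y-w| , N_X(w) ) : w ∈ X, |w - y| ≤ ρ, |w - x| ≤ δ } > 0. Then d(y, X) ≤ |y - x| - μδ. -/
open Set Metric Filter
open scoped ENNReal Topology Classical

/-! Suppose `infDist y X > ρ - μ δ` and fix `μ' < μ` with `infDist y X > ρ - μ' δ`. Global
minimizers `p n` of the penalized functionals `‖y - q‖ + μ' ‖q - x‖ + n · infDist q X ²`, together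
with nearest points `z n ∈ X`, satisfy a first-order condition: the proximal normal
`2n (p n - z n)` at `z n` lies within `μ'` of the unit vector from `p n` to `y`. Since the values
stay below `ρ`, a cluster point `w ∈ X` has `‖y - w‖ + μ' ‖w - x‖ ≤ ρ`, hence `‖w - x‖ < δ`, and
the proximal normals converge to a limiting normal at `w` within `μ'` of `(y - w) / ‖y - w‖`. -/

theorem exists_forall_le_of_mul_dist_le {M : Type*} [PseudoMetricSpace M] [ProperSpace M]
    {f : M → ℝ} (hf : Continuous f) (x₀ : M) {μ : ℝ} (hμ : 0 < μ)
    (hf_ge : ∀ q, μ * dist q x₀ ≤ f q) : ∃ p, ∀ q, f p ≤ f q := by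
  refine hf.exists_forall_le' x₀ ?_
  filter_upwards [(isCompact_closedBall x₀ (f x₀ / μ)).compl_mem_cocompact] with q hq
  rw [mem_compl_iff, mem_closedBall, not_le, div_lt_iff₀ hμ] at hq
  linarith [hf_ge q]

theorem tendsto_zero_of_natCast_mul_sq_le {a : ℕ → ℝ} {C : ℝ} (ha : ∀ n, 0 ≤ a n)
    (h : ∀ n, n * a n ^ 2 ≤ C) : Tendsto a atTop (𝓝 0) := by
  have hsq : Tendsto (fun n => a n ^ 2) atTop (𝓝 0) := by
    refine squeeze_zero' (.of_forall fun n => sq_nonneg _) ?_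
      (tendsto_const_div_atTop_nhds_zero_nat C)
    filter_upwards [eventually_gt_atTop 0] with n hn
    exact (le_div_iff₀' (by exact_mod_cast hn)).2 (h n)
  simpa [Real.sqrt_sq (ha _)] using hsq.sqrt

theorem HasFDerivAt.norm_le_of_isLocalMin_add_mul_norm {E : Type*} [NormedAddCommGroup E]
    [NormedSpace ℝ E] {ψ : E → ℝ} {ψ' : E →L[ℝ] ℝ} {p : E} {L : ℝ} (hL : 0 ≤ L)
    (hψ : HasFDerivAt ψ ψ' p) (hmin : IsLocalMin (fun q => ψ q + L * ‖q - p‖) p) :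
    ‖ψ'‖ ≤ L := by
  have hdir : ∀ v, -(L * ‖v‖) ≤ ψ' v := by
    intro v
    have hlim := hψ.lim v (c := fun n : ℕ => (n : ℝ))
      (by simpa using tendsto_natCast_atTop_atTop)
    have hclose : Tendsto (fun n : ℕ => p + (n : ℝ)⁻¹ • v) atTop (𝓝 p) := by
      simpa using tendsto_const_nhds.add
        ((tendsto_inv_atTop_zero.comp (tendsto_natCast_atTop_atTop (R := ℝ))).smul_const v)
    refine ge_of_tendsto hlim ?_
    filter_upwards [hclose.eventually hmin, eventually_gt_atTop 0] with n hn hpos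
    have hn_pos : (0 : ℝ) < n := by exact_mod_cast hpos
    simp only [sub_self, norm_zero, mul_zero, add_zero, add_sub_cancel_left, norm_smul,
      norm_inv, Real.norm_natCast] at hn
    have hcancel : (n : ℝ) * (L * ((n : ℝ)⁻¹ * ‖v‖)) = L * ‖v‖ := by field_simp
    rw [smul_eq_mul, mul_sub]
    nlinarith [mul_le_mul_of_nonneg_left hn hn_pos.le]
  refine ContinuousLinearMap.opNorm_le_bound _ hL fun v => abs_le.2 ⟨hdir v, ?_⟩
  simpa using hdir (-v)

noncomputable def penalty {F : Type*} [NormedAddCommGroup F] (X : Set F) (x y : F) (μ c : ℝ)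
    (q : F) : ℝ :=
  ‖y - q‖ + μ * ‖q - x‖ + c * infDist q X ^ 2

theorem continuous_penalty {F : Type*} [NormedAddCommGroup F] (X : Set F) (x y : F) (μ c : ℝ) :
    Continuous (penalty X x y μ c) := by
  unfold penalty
  fun_prop

section

variable {F : Type*} [NormedAddCommGroup F] [InnerProductSpace ℝ F] {X : Set F}

theorem hasFDerivAt_norm {x : F} (hx : x ≠ 0) :
    HasFDerivAt (‖·‖) (innerSL ℝ (‖x‖⁻¹ • x)) x := by
  have h := (hasStrictFDerivAt_norm_sq x).hasFDerivAt.sqrt (by positivity)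
  simp only [Real.sqrt_sq (norm_nonneg _)] at h
  refine h.congr_fderiv ?_
  ext v
  simp
  field_simp

theorem hasFDerivAt_norm_sub_add_mul_norm_sub_sq {y z p : F} (c : ℝ) (hp : p ≠ y) :
    HasFDerivAt (fun q => ‖y - q‖ + c * ‖q - z‖ ^ 2)
      (innerSL ℝ ((2 * c) • (p - z) - ‖y - p‖⁻¹ • (y - p))) p := by
  have hnorm := (hasFDerivAt_norm (sub_ne_zero.2 hp.symm)).comp p
    ((hasFDerivAt_const y p).sub (hasFDerivAt_id p))
  refine (hnorm.add (((hasFDerivAt_id p).sub_const z).norm_sq.const_mul c)).congr_fderiv ?_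
  ext v
  simp
  ring

theorem mem_proxNormalCone_and_norm_sub_le_of_forall_penalty_le {x y p z : F} {μ c : ℝ}
    (hμ : 0 ≤ μ) (hc : 0 ≤ c) (hmin : ∀ q, penalty X x y μ c p ≤ penalty X x y μ c q)
    (hz : z ∈ X) (hpz : infDist p X = dist p z) (hp : p ≠ y) :
    (2 * c) • (p - z) ∈ proxNormalCone X z ∧
      ‖(2 * c) • (p - z) - ‖y - p‖⁻¹ • (y - p)‖ ≤ μ := by
  refine ⟨⟨2 * c, p - z, by positivity, rfl, by rw [add_sub_cancel]; exact ⟨hz, hpz.symm⟩⟩, ?_⟩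
  rw [← innerSL_apply_norm ℝ]
  refine (hasFDerivAt_norm_sub_add_mul_norm_sub_sq c hp).norm_le_of_isLocalMin_add_mul_norm hμ
    (.of_forall fun q => ?_)
  have hqz : infDist q X ≤ ‖q - z‖ := dist_eq_norm q z ▸ infDist_le_dist_of_mem hz
  have hqx : ‖q - x‖ ≤ ‖q - p‖ + ‖p - x‖ := norm_sub_le_norm_sub_add_norm_sub q p x
  have hpq := hmin q
  rw [penalty, penalty, hpz, dist_eq_norm] at hpq
  simp only [sub_self, norm_zero, mul_zero, add_zero]
  nlinarith [mul_le_mul_of_nonneg_left (pow_le_pow_left₀ infDist_nonneg hqz 2) hc,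
    mul_le_mul_of_nonneg_left hqx hμ]

theorem mem_limNormalCone_of_tendsto {z v : ℕ → F} {w v₀ : F} (hz : Tendsto z atTop (𝓝 w))
    (hv : Tendsto v atTop (𝓝 v₀)) (h : ∀ᶠ n in atTop, z n ∈ X ∧ v n ∈ proxNormalCone X (z n)) :
    v₀ ∈ limNormalCone X w := by
  obtain ⟨N, hN⟩ := eventually_atTop.1 h
  exact ⟨fun n => z (n + N), fun n => v (n + N), fun n => (hN _ (Nat.le_add_left N n)).2,
    fun n => (hN _ (Nat.le_add_left N n)).1, hz.comp (tendsto_add_atTop_nat N),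
    hv.comp (tendsto_add_atTop_nat N)⟩

theorem exists_mem_limNormalCone_norm_sub_le [ProperSpace F] {z v u : ℕ → F} {w u₀ : F} {μ : ℝ}
    (hz : Tendsto z atTop (𝓝 w)) (hu : Tendsto u atTop (𝓝 u₀))
    (h : ∀ᶠ n in atTop, z n ∈ X ∧ v n ∈ proxNormalCone X (z n) ∧ ‖v n - u n‖ ≤ μ) :
    ∃ v₀ ∈ limNormalCone X w, ‖v₀ - u₀‖ ≤ μ := by
  have hbdd : ∀ᶠ n in atTop, v n ∈ closedBall (0 : F) (μ + 1 + ‖u₀‖) := by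
    filter_upwards [h, hu.eventually (closedBall_mem_nhds u₀ one_pos)] with n hn hun
    rw [dist_eq_norm] at hun
    rw [mem_closedBall_zero_iff]
    calc ‖v n‖ = ‖(v n - u n) + (u n - u₀) + u₀‖ := by abel_nf
      _ ≤ ‖v n - u n‖ + ‖u n - u₀‖ + ‖u₀‖ := norm_add₃_le
      _ ≤ μ + 1 + ‖u₀‖ := by linarith [hn.2.2]
  obtain ⟨v₀, -, φ, hφ, hvφ⟩ :=
    tendsto_subseq_of_frequently_bounded isBounded_closedBall hbdd.frequently
  have hφh := hφ.tendsto_atTop.eventually h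
  refine ⟨v₀, mem_limNormalCone_of_tendsto (hz.comp hφ.tendsto_atTop) hvφ
    (hφh.mono fun n hn => ⟨hn.1, hn.2.1⟩), ?_⟩
  exact le_of_tendsto ((hvφ.sub (hu.comp hφ.tendsto_atTop)).norm) (hφh.mono fun n hn => hn.2.2)

theorem IsClosed.exists_dist_add_mul_dist_le_and_infDist_limNormalCone_le [ProperSpace F]
    (hX : IsClosed X) {x y : F} (hx : x ∈ X) (hy : y ∉ X) {μ : ℝ} (hμ : 0 < μ) :
    ∃ w ∈ X, dist y w + μ * dist w x ≤ dist y x ∧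
      infDist (‖y - w‖⁻¹ • (y - w)) (limNormalCone X w) ≤ μ := by
  choose p hp using fun n : ℕ => exists_forall_le_of_mul_dist_le
    (continuous_penalty X x y μ n) x hμ fun q => by
      have : 0 ≤ (n : ℝ) * infDist q X ^ 2 := by positivity
      rw [penalty, dist_eq_norm]
      linarith [norm_nonneg (y - q)]
  have hval : ∀ n : ℕ, ‖y - p n‖ + μ * ‖p n - x‖ ≤ dist y x ∧
      n * infDist (p n) X ^ 2 ≤ dist y x := fun n => by
    have hle := (hp n x).trans_eq
      (show penalty X x y μ n x = dist y x by simp [penalty, infDist_zero_of_mem hx, dist_eq_norm])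
    have : 0 ≤ (n : ℝ) * infDist (p n) X ^ 2 := by positivity
    rw [penalty] at hle
    constructor <;> nlinarith [norm_nonneg (y - p n), norm_nonneg (p n - x)]
  choose z hzX hpz using fun n => hX.exists_infDist_eq_dist ⟨x, hx⟩ (p n)
  have hd : Tendsto (fun n => infDist (p n) X) atTop (𝓝 0) :=
    tendsto_zero_of_natCast_mul_sq_le (fun _ => infDist_nonneg) fun n => (hval n).2
  obtain ⟨w, -, φ, hφ, hpw⟩ := tendsto_subseq_of_bounded (x := p)
    (isBounded_closedBall (x := x) (r := dist y x / μ)) fun n => by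
      rw [mem_closedBall, dist_eq_norm, le_div_iff₀' hμ]
      linarith [(hval n).1, norm_nonneg (y - p n)]
  have hzw : Tendsto (z ∘ φ) atTop (𝓝 w) :=
    hpw.congr_dist (by simpa only [Function.comp_def, ← hpz] using hd.comp hφ.tendsto_atTop)
  have hwX : w ∈ X := hX.mem_of_tendsto hzw (.of_forall fun n => hzX _)
  have hwy : w ≠ y := fun h => hy (h ▸ hwX)
  refine ⟨w, hwX, ?_, ?_⟩
  · refine le_of_tendsto' ((tendsto_const_nhds.dist hpw).add
      (tendsto_const_nhds.mul (hpw.dist tendsto_const_nhds))) fun n => ?_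
    simpa only [Function.comp_apply, dist_eq_norm] using (hval (φ n)).1
  · have hyp := tendsto_const_nhds (x := y) |>.sub hpw
    obtain ⟨v, hv, hvu⟩ := exists_mem_limNormalCone_norm_sub_le hzw
      ((hyp.norm.inv₀ (norm_ne_zero_iff.2 (sub_ne_zero.2 hwy.symm))).smul hyp)
      (v := fun n => (2 * (φ n : ℝ)) • (p (φ n) - z (φ n))) (μ := μ) <| by
        filter_upwards [hpw.eventually_ne hwy] with n hn
        exact ⟨hzX _, mem_proxNormalCone_and_norm_sub_le_of_forall_penalty_le hμ.le
          (φ n).cast_nonneg (hp _) (hzX _) (hpz _) hn⟩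
    exact (infDist_le_dist_of_mem hv).trans (by rwa [dist_comm, dist_eq_norm])

end

theorem distance_decrease {E : Type*} [NormedAddCommGroup E] [InnerProductSpace ℝ E]
    [FiniteDimensional ℝ E] (X : Set E) (hX : IsClosed X) (x y : E) (hx : x ∈ X) (hy : y ∉ X)
    (δ : ℝ) (hδ : 0 < δ) (μ : ℝ) (hμ : 0 < μ)
    (hbound : ∀ w ∈ X, dist w y ≤ dist y x → dist w x ≤ δ →
      μ ≤ Metric.infDist (‖y - w‖⁻¹ • (y - w)) (limNormalCone X w)) :
    Metric.infDist y X ≤ dist y x - μ * δ := by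
  by_contra! hlt
  obtain ⟨μ', hμ'_gt, hμ'_lt⟩ :=
    exists_between (max_lt ((div_lt_iff₀ hδ).2 (by linarith : dist y x - infDist y X < μ * δ)) hμ)
  have hμ'_pos : 0 < μ' := (le_max_right _ _).trans_lt hμ'_gt
  have hgap : dist y x - infDist y X < μ' * δ :=
    (div_lt_iff₀ hδ).1 ((le_max_left _ _).trans_lt hμ'_gt)
  obtain ⟨w, hwX, hw, hwN⟩ :=
    hX.exists_dist_add_mul_dist_le_and_infDist_limNormalCone_le hx hy hμ'_pos
  have hyw : infDist y X ≤ dist y w := infDist_le_dist_of_mem hwX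
  have hwx : dist w x < δ := lt_of_mul_lt_mul_left (by linarith) hμ'_pos.le
  have hwy : dist w y ≤ dist y x := by
    rw [dist_comm]
    linarith [mul_nonneg hμ'_pos.le (dist_nonneg (x := w) (y := x))]
  linarith [hbound w hwX hwy hwx.le]
end

section
/- If w ∈ X satisfies |w - x| < κ|x - y| where y ∈ P_Y(x), x ∈ X, and κ ≤ 1, then w ∉ Y; in particular w ≠ y, and d((w-y)/|w-y|, N_Y(y)) ≤ |w - x|/|x - y| < κ. -/
open Set Metric Filter
open scoped ENNReal Topology Classical

/-
Since `‖w - x‖ < ‖x - y‖ = d(x, Y)`, the point `w` is not in `Y`. As `x - y` is a proximal normal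
to `Y` at `y`, the distance from `(w - y)/‖w - y‖` to the normal cone is at most its distance to the
ray `ℝ₊ (x - y)`, which is `sin θ` for the angle `θ` between `w - y` and `x - y` (or `1` if `θ` is
obtuse). Computing twice the area of the triangle `x y w` with base `x - y` and with base `w - y`
gives `‖x - y‖ ‖w - y‖ sin θ ≤ ‖w - y‖ ‖w - x‖`.
-/

section InnerProduct

variable {F : Type*} [NormedAddCommGroup F] [InnerProductSpace ℝ F]

open RealInnerProductSpace

theorem norm_sub_orthogonalComponent_sq_mul_norm_sq (a : F) {b : F} (hb : b ≠ 0) :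
    ‖a - (⟪a, b⟫ / ‖b‖ ^ 2) • b‖ ^ 2 * ‖b‖ ^ 2 = ‖a‖ ^ 2 * ‖b‖ ^ 2 - ⟪a, b⟫ ^ 2 := by
  have hb2 : ‖b‖ ^ 2 ≠ 0 := by positivity
  rw [norm_sub_sq_real, inner_smul_right, norm_smul, Real.norm_eq_abs, mul_pow, sq_abs]
  field_simp
  ring

/-- The left side is twice the area of the triangle `0 a b` (base `b`); the right side is at
least twice that area (base `a`, height at most `‖a - b‖`). -/
theorem norm_sub_orthogonalComponent_mul_norm_le (a : F) {b : F} (hb : b ≠ 0) :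
    ‖a - (⟪a, b⟫ / ‖b‖ ^ 2) • b‖ * ‖b‖ ≤ ‖a‖ * ‖a - b‖ := by
  refine le_of_sq_le_sq ?_ (by positivity)
  -- the two squares differ by `(‖a‖² - ⟪a, b⟫)²`
  rw [mul_pow, norm_sub_orthogonalComponent_sq_mul_norm_sq a hb, mul_pow, norm_sub_sq_real]
  nlinarith [sq_nonneg (‖a‖ ^ 2 - ⟪a, b⟫)]

theorem exists_nonneg_norm_normalize_sub_smul_le (a : F) {b : F} (hb : b ≠ 0) :
    ∃ l : ℝ, 0 ≤ l ∧ ‖‖a‖⁻¹ • a - l • b‖ ≤ ‖a - b‖ / ‖b‖ := by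
  have hb0 : 0 < ‖b‖ := norm_pos_iff.mpr hb
  rcases le_or_gt ⟪a, b⟫ 0 with hab | hab
  · refine ⟨0, le_rfl, ?_⟩
    have h_unit : ‖‖a‖⁻¹ • a‖ ≤ 1 := by
      rcases eq_or_ne a 0 with rfl | ha
      · simp
      · exact (norm_smul_inv_norm (𝕜 := ℝ) ha).le
    have h_far : ‖b‖ ≤ ‖a - b‖ := by
      refine le_of_sq_le_sq ?_ (norm_nonneg _)
      rw [norm_sub_sq_real]
      nlinarith [sq_nonneg ‖a‖]
    rw [zero_smul, sub_zero]
    exact h_unit.trans ((one_le_div hb0).mpr h_far)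
  · have ha : 0 < ‖a‖ := by
      rcases eq_or_ne a 0 with rfl | ha
      · simp at hab
      · exact norm_pos_iff.mpr ha
    refine ⟨‖a‖⁻¹ * (⟪a, b⟫ / ‖b‖ ^ 2), by positivity, ?_⟩
    rw [mul_smul, ← smul_sub, norm_smul, norm_inv, norm_norm, le_div_iff₀ hb0, mul_assoc,
      inv_mul_le_iff₀ ha]
    exact norm_sub_orthogonalComponent_mul_norm_le a hb

end InnerProduct

section NormalCone

variable {E : Type*} [NormedAddCommGroup E] [InnerProductSpace ℝ E]

theorem proxNormalCone_subset_limNormalCone {Y : Set E} {y : E} (hy : y ∈ Y) :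
    proxNormalCone Y y ⊆ limNormalCone Y y := fun _ hv =>
  ⟨fun _ => y, fun _ => _, fun _ => hv, fun _ => hy, tendsto_const_nhds, tendsto_const_nhds⟩

theorem smul_sub_mem_proxNormalCone {Y : Set E} {x y : E} (hy : y ∈ projSet Y x) {l : ℝ}
    (hl : 0 ≤ l) : l • (x - y) ∈ proxNormalCone Y y :=
  ⟨l, x - y, hl, rfl, by rwa [add_sub_cancel]⟩

end NormalCone

theorem near_point_not_mem_and_angle_bound_general {E : Type*} [NormedAddCommGroup E]
    [InnerProductSpace ℝ E] (Y : Set E) (x w y : E) (hy : y ∈ projSet Y x) (κ : ℝ) (hκ : κ ≤ 1)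
    (hlt : ‖w - x‖ < κ * ‖x - y‖) :
    w ∉ Y ∧ w ≠ y ∧
      Metric.infDist (‖w - y‖⁻¹ • (w - y)) (limNormalCone Y y) ≤ ‖w - x‖ / ‖x - y‖ ∧
      ‖w - x‖ / ‖x - y‖ < κ := by
  have hxy : 0 < ‖x - y‖ := by
    by_contra! h
    have : ‖x - y‖ = 0 := le_antisymm h (norm_nonneg _)
    rw [this, mul_zero] at hlt
    exact (norm_nonneg _).not_gt hlt
  have hwY : w ∉ Y := by
    refine notMem_of_dist_lt_infDist (x := x) ?_
    rw [← hy.2, dist_comm, dist_eq_norm, dist_eq_norm]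
    exact hlt.trans_le (mul_le_of_le_one_left hxy.le hκ)
  obtain ⟨l, hl, hdist⟩ :=
    exists_nonneg_norm_normalize_sub_smul_le (w - y) (norm_pos_iff.mp hxy)
  rw [sub_sub_sub_cancel_right] at hdist
  refine ⟨hwY, fun h => hwY (h ▸ hy.1), ?_, (div_lt_iff₀ hxy).mpr hlt⟩
  refine (infDist_le_dist_of_mem ?_).trans (by rwa [dist_eq_norm])
  exact proxNormalCone_subset_limNormalCone hy.1 (smul_sub_mem_proxNormalCone hy hl)

theorem near_point_not_mem_and_angle_bound {E : Type*} [NormedAddCommGroup E]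
    [InnerProductSpace ℝ E] [FiniteDimensional ℝ E] (X Y : Set E) (hX : IsClosed X)
    (hY : IsClosed Y) (hXne : X.Nonempty) (hYne : Y.Nonempty) (x w y : E)
    (hx : x ∈ X) (hw : w ∈ X) (hy : y ∈ projSet Y x) (κ : ℝ) (hκ : κ ≤ 1)
    (hlt : ‖w - x‖ < κ * ‖x - y‖) :
    w ∉ Y ∧ w ≠ y ∧
      Metric.infDist (‖w - y‖⁻¹ • (w - y)) (limNormalCone Y y) ≤ ‖w - x‖ / ‖x - y‖ ∧
      ‖w - x‖ / ‖x - y‖ < κ :=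
  near_point_not_mem_and_angle_bound_general Y x w y hy κ hκ hlt
end

section
/- (Transversality implies intrinsic transversality quantitatively) Suppose closed sets X, Y ⊂ E satisfy N_X(z) ∩ (-N_Y(z)) = {0} at z ∈ X ∩ Y. Then the quantity κ₀ := min over unit vectors u of max{ d(u, N_Y(z)), d(u, -N_X(z)) } is strictly positive, and for every κ < κ₀, X and Y are strongly intrinsically transversal at z with constant κ. -/
open Set Metric Filter
open scoped ENNReal Topology Classical

/-!
Outer semicontinuity of the limiting normal cone makes `(x, u) ↦ d(u, N_X(x))` lower
semicontinuous at `(z, u)` (the nearly closest normals stay bounded, so a subsequence converges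
into `N_X(z)`). Since `N_X(z) ∩ -N_Y(z) = {0}`, the continuous function
`u ↦ max {d(u, N_Y(z)), d(u, -N_X(z))}` is positive on the compact unit sphere, so its minimum
`κ₀` is positive; for `κ < κ₀`, lower semicontinuity and the tube lemma over the sphere give a
neighbourhood of `z` on which `κ < max {d(u, N_Y(y)), d(u, -N_X(x))}` for every unit vector `u`.
-/

/-- The constant `κ₀` of the transversality of two cones `A = N_Y(z)` and `B = -N_X(z)`. -/
noncomputable def transversalityModulus {E : Type*} [NormedAddCommGroup E] (A B : Set E) : ℝ :=
  sInf {r : ℝ | ∃ u : E, ‖u‖ = 1 ∧ r = max (infDist u A) (infDist u B)}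

section Modulus

variable {E : Type*} [NormedAddCommGroup E] {A B : Set E}

theorem transversalityModulus_le {u : E} (hu : ‖u‖ = 1) :
    transversalityModulus A B ≤ max (infDist u A) (infDist u B) :=
  csInf_le ⟨0, by rintro r ⟨v, -, rfl⟩; exact le_max_of_le_left infDist_nonneg⟩ ⟨u, hu, rfl⟩

theorem transversalityModulus_pos [NormedSpace ℝ E] [ProperSpace E] [Nontrivial E]
    (hA : IsClosed A) (hB : IsClosed B) (hA₀ : A.Nonempty) (hB₀ : B.Nonempty)
    (hAB : A ∩ B ⊆ {0}) : 0 < transversalityModulus A B := by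
  set f : E → ℝ := fun u => max (infDist u A) (infDist u B)
  have hf : Continuous f := (continuous_infDist_pt A).max (continuous_infDist_pt B)
  obtain ⟨u₀, hu₀, hmin⟩ := (isCompact_sphere (0 : E) 1).exists_isMinOn
    (NormedSpace.sphere_nonempty.mpr zero_le_one) hf.continuousOn
  rw [mem_sphere_zero_iff_norm] at hu₀
  have hfu₀ : 0 < f u₀ := by
    by_contra! h
    have hA' : u₀ ∈ A := (hA.mem_iff_infDist_zero hA₀).2
      (le_antisymm ((le_max_left _ _).trans h) infDist_nonneg)
    have hB' : u₀ ∈ B := (hB.mem_iff_infDist_zero hB₀).2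
      (le_antisymm ((le_max_right _ _).trans h) infDist_nonneg)
    have : u₀ = 0 := hAB ⟨hA', hB'⟩
    simp [this] at hu₀
  refine hfu₀.trans_le (le_csInf ⟨f u₀, u₀, hu₀, rfl⟩ ?_)
  rintro r ⟨u, hu, rfl⟩
  exact hmin (mem_sphere_zero_iff_norm.2 hu)

end Modulus

/-- Lower semicontinuity at `(z, u)` of `(x, u) ↦ infDist u (F x)` for a set-valued map `F` that
is outer semicontinuous at `z`. -/
theorem eventually_lt_infDist_of_tendsto_mem {α E : Type*} [TopologicalSpace α]
    [FirstCountableTopology α] [MetricSpace E] [ProperSpace E] {F : α → Set E} {z : α} {u : E}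
    (hF : ∀ (xs : ℕ → α) (vs : ℕ → E) (v : E), (∀ n, vs n ∈ F (xs n)) →
      Tendsto xs atTop (𝓝 z) → Tendsto vs atTop (𝓝 v) → v ∈ F z)
    {r : ℝ} (hr : r < infDist u (F z)) :
    ∀ᶠ p : α × E in 𝓝 (z, u), (F p.1).Nonempty → r < infDist p.2 (F p.1) := by
  by_contra h
  obtain ⟨p, hp, hpF⟩ := frequently_iff_seq_forall.1 (not_eventually.1 h)
  simp only [Classical.not_imp, not_lt] at hpF
  obtain ⟨r', hrr', hr'⟩ := exists_between hr
  choose v hvF hvd using fun n => (infDist_lt_iff (hpF n).1).1 ((hpF n).2.trans_lt hrr')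
  have hbdd : ∀ n, v n ∈ cthickening r' (range fun n => (p n).2) := fun n =>
    mem_cthickening_of_dist_le _ _ _ _ (mem_range_self n) (by rw [dist_comm]; exact (hvd n).le)
  obtain ⟨w, -, φ, hφ, hw⟩ := tendsto_subseq_of_bounded
    (isBounded_range_of_tendsto _ hp.snd_nhds).cthickening hbdd
  have hwF : w ∈ F z :=
    hF _ _ _ (fun n => hvF (φ n)) (hp.fst_nhds.comp hφ.tendsto_atTop) hw
  have hdist : dist u w ≤ r' := le_of_tendsto ((hp.snd_nhds.comp hφ.tendsto_atTop).dist hw)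
    (Eventually.of_forall fun n => (hvd (φ n)).le)
  linarith [infDist_le_dist_of_mem (x := u) hwF]

section NormalCone

variable {E : Type*} [NormedAddCommGroup E] [InnerProductSpace ℝ E] {X : Set E}

theorem mem_limNormalCone_iff {z v : E} :
    v ∈ limNormalCone X z ↔ ∀ ε > 0, ∃ x ∈ X, ∃ w ∈ proxNormalCone X x,
      dist x z < ε ∧ dist w v < ε := by
  constructor
  · rintro ⟨xs, vs, hvs, hxs, hxz, hvv⟩ ε hε
    obtain ⟨n, hxn, hvn⟩ :=
      ((hxz.eventually (ball_mem_nhds z hε)).and (hvv.eventually (ball_mem_nhds v hε))).exists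
    exact ⟨xs n, hxs n, vs n, hvs n, hxn, hvn⟩
  · intro h
    choose xs hxs vs hvs hxd hvd using fun n : ℕ => h (1 / ((n : ℝ) + 1)) Nat.one_div_pos_of_nat
    have h0 : Tendsto (fun n : ℕ => 1 / ((n : ℝ) + 1)) atTop (𝓝 0) :=
      tendsto_one_div_add_atTop_nhds_zero_nat
    exact ⟨xs, vs, hvs, hxs,
      tendsto_iff_dist_tendsto_zero.2 (squeeze_zero (fun _ => dist_nonneg) (fun n => (hxd n).le) h0),
      tendsto_iff_dist_tendsto_zero.2 (squeeze_zero (fun _ => dist_nonneg) (fun n => (hvd n).le) h0)⟩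

theorem mem_limNormalCone_of_tendsto_s7 {xs vs : ℕ → E} {z v : E}
    (hvs : ∀ n, vs n ∈ limNormalCone X (xs n)) (hxz : Tendsto xs atTop (𝓝 z))
    (hvv : Tendsto vs atTop (𝓝 v)) : v ∈ limNormalCone X z := by
  refine mem_limNormalCone_iff.2 fun ε hε => ?_
  obtain ⟨n, hxn, hvn⟩ := ((hxz.eventually (ball_mem_nhds z (half_pos hε))).and
    (hvv.eventually (ball_mem_nhds v (half_pos hε)))).exists
  obtain ⟨x, hx, w, hw, hxd, hwd⟩ := mem_limNormalCone_iff.1 (hvs n) (ε / 2) (half_pos hε)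
  refine ⟨x, hx, w, hw, ?_, ?_⟩
  · linarith [dist_triangle x (xs n) z, mem_ball.1 hxn]
  · linarith [dist_triangle w (vs n) v, mem_ball.1 hvn]

theorem mem_neg_limNormalCone_of_tendsto {xs vs : ℕ → E} {z v : E}
    (hvs : ∀ n, vs n ∈ -limNormalCone X (xs n)) (hxz : Tendsto xs atTop (𝓝 z))
    (hvv : Tendsto vs atTop (𝓝 v)) : v ∈ -limNormalCone X z :=
  mem_limNormalCone_of_tendsto_s7 (vs := fun n => -vs n) hvs hxz hvv.neg

theorem isClosed_limNormalCone (z : E) : IsClosed (limNormalCone X z) :=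
  IsSeqClosed.isClosed fun _ _ hvs hv => mem_limNormalCone_of_tendsto_s7 hvs tendsto_const_nhds hv

theorem zero_mem_proxNormalCone {x : E} (hx : x ∈ X) : 0 ∈ proxNormalCone X x :=
  ⟨0, 0, le_rfl, by simp, by simp [projSet, hx, infDist_zero_of_mem hx]⟩

theorem zero_mem_limNormalCone {x : E} (hx : x ∈ X) : 0 ∈ limNormalCone X x :=
  ⟨fun _ => x, fun _ => 0, fun _ => zero_mem_proxNormalCone hx, fun _ => hx,
    tendsto_const_nhds, tendsto_const_nhds⟩

theorem strongIntrinsicallyTransversal_of_forall_sphere [ProperSpace E] {Y : Set E} {z : E}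
    {κ : ℝ} (h : ∀ u ∈ sphere (0 : E) 1,
      κ < max (infDist u (limNormalCone Y z)) (infDist u (-limNormalCone X z))) :
    StrongIntrinsicallyTransversal X Y z κ := by
  let P : E → E → E → Prop := fun x y u => x ∈ X → y ∈ Y →
    κ < max (infDist u (limNormalCone Y y)) (infDist u (-limNormalCone X x))
  have hev : ∀ u ∈ sphere (0 : E) 1, ∀ᶠ q : (E × E) × E in 𝓝 ((z, z), u), P q.1.1 q.1.2 q.2 := by
    intro u hu
    rcases lt_max_iff.1 (h u hu) with hY | hX
    · have := eventually_lt_infDist_of_tendsto_mem (F := limNormalCone Y)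
        (fun _ _ _ => mem_limNormalCone_of_tendsto_s7) hY
      filter_upwards [(continuous_fst.snd.prodMk continuous_snd).tendsto' _ (z, u) rfl
        |>.eventually this] with q hq _ hy
      exact lt_max_of_lt_left (hq ⟨0, zero_mem_limNormalCone hy⟩)
    · have := eventually_lt_infDist_of_tendsto_mem (F := fun x => -limNormalCone X x)
        (fun _ _ _ => mem_neg_limNormalCone_of_tendsto) hX
      filter_upwards [(continuous_fst.fst.prodMk continuous_snd).tendsto' _ (z, u) rfl
        |>.eventually this] with q hq hx _
      exact lt_max_of_lt_right (hq ⟨0, by simpa using zero_mem_limNormalCone hx⟩)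
  have hZ := (isCompact_sphere (0 : E) 1).eventually_forall_of_forall_eventually
    (P := fun (p : E × E) u => P p.1 p.2 u) hev
  rw [nhds_prod_eq] at hZ
  obtain ⟨Z, hZ, hZκ⟩ := eventually_prod_self_iff (r := fun x y => ∀ u ∈ sphere (0 : E) 1, P x y u)
    |>.1 hZ
  refine ⟨Z, hZ, fun x hx y hy => (hZκ x hx.2 y hy.2 _ ?_ hx.1.1 hy.1.1).le⟩
  have hxy : x - y ≠ 0 := sub_ne_zero.2 fun h => hx.1.2 (h ▸ hy.1.1)
  simpa using norm_smul_inv_norm (𝕜 := ℝ) hxy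

end NormalCone

theorem transversality_implies_strong_intrinsic_general {E : Type*} [NormedAddCommGroup E]
    [InnerProductSpace ℝ E] [FiniteDimensional ℝ E] [Nontrivial E]
    (X Y : Set E) (z : E) (hz : z ∈ X ∩ Y)
    (htv : limNormalCone X z ∩ -(limNormalCone Y z) = {0}) :
    0 < sInf {r : ℝ | ∃ u : E, ‖u‖ = 1 ∧
        r = max (Metric.infDist u (limNormalCone Y z))
                (Metric.infDist u (-(limNormalCone X z)))} ∧
    ∀ κ : ℝ, κ < sInf {r : ℝ | ∃ u : E, ‖u‖ = 1 ∧
        r = max (Metric.infDist u (limNormalCone Y z))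
                (Metric.infDist u (-(limNormalCone X z)))} →
      StrongIntrinsicallyTransversal X Y z κ := by
  have hdisj : limNormalCone Y z ∩ -limNormalCone X z ⊆ {0} := fun u ⟨hY, hX⟩ => by
    have : -u ∈ limNormalCone X z ∩ -limNormalCone Y z := ⟨hX, by simpa using hY⟩
    simpa [htv] using this
  refine ⟨transversalityModulus_pos (isClosed_limNormalCone z) (isClosed_limNormalCone z).neg
    ⟨0, zero_mem_limNormalCone hz.2⟩ ⟨0, by simpa using zero_mem_limNormalCone hz.1⟩ hdisj,
    fun κ hκ => strongIntrinsicallyTransversal_of_forall_sphere fun u hu =>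
      hκ.trans_le (transversalityModulus_le (mem_sphere_zero_iff_norm.1 hu))⟩

theorem transversality_implies_strong_intrinsic {E : Type*} [NormedAddCommGroup E]
    [InnerProductSpace ℝ E] [FiniteDimensional ℝ E] [Nontrivial E]
    (X Y : Set E) (hX : IsClosed X) (hY : IsClosed Y) (z : E) (hz : z ∈ X ∩ Y)
    (htv : limNormalCone X z ∩ -(limNormalCone Y z) = {0}) :
    0 < sInf {r : ℝ | ∃ u : E, ‖u‖ = 1 ∧
        r = max (Metric.infDist u (limNormalCone Y z))
                (Metric.infDist u (-(limNormalCone X z)))} ∧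
    ∀ κ : ℝ, κ < sInf {r : ℝ | ∃ u : E, ‖u‖ = 1 ∧
        r = max (Metric.infDist u (limNormalCone Y z))
                (Metric.infDist u (-(limNormalCone X z)))} →
      StrongIntrinsicallyTransversal X Y z κ :=
  transversality_implies_strong_intrinsic_general X Y z hz htv
end

section
/- (Relative transversality and relative interiors) Two closed convex sets X, Y ⊂ E intersect relatively transversally at a point z ∈ X ∩ Y if and only if the relative interiors of X and Y intersect. -/
open Set Metric Filter
open scoped ENNReal Topology Classical

/-!
If `p` lies in both relative interiors, a vector `v` separating `X` and `Y` at `z` defines a linear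
functional that attains its maximum on `X` and its minimum on `Y` at the relative interior point
`p`, so it is constant on `X ∪ Y`; then `v` is orthogonal to the span of `(X ∪ Y) - z`, which
contains it, so `v = 0`. Conversely, if the relative interiors are disjoint, then `0 = z - z` is a
point of the convex set `X - Y` outside its relative interior. Since `0 ∈ X - Y`, the set `X - Y`
has nonempty interior in `span (X - Y)`, and separating `0` from it there gives a nonzero vector of
`span (X - Y) ≤ span ((X ∪ Y) - z)` that separates `X` and `Y` at `z`.
-/

open scoped Pointwise

theorem mem_intrinsicInterior_iff_mem_nhdsWithin {𝕜 V P : Type*} [Ring 𝕜] [AddCommGroup V]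
    [Module 𝕜 V] [TopologicalSpace P] [AddTorsor V P] {s : Set P} {p : P} :
    p ∈ intrinsicInterior 𝕜 s ↔ p ∈ affineSpan 𝕜 s ∧ s ∈ 𝓝[affineSpan 𝕜 s] p := by
  simp only [mem_intrinsicInterior, mem_interior_iff_mem_nhds]
  refine ⟨?_, fun ⟨hp, hs⟩ => ⟨⟨p, hp⟩, preimage_coe_mem_nhds_subtype.2 hs, rfl⟩⟩
  rintro ⟨q, hq, rfl⟩
  exact ⟨q.2, preimage_coe_mem_nhds_subtype.1 hq⟩

section TopologicalVectorSpace

variable {V : Type*} [AddCommGroup V] [Module ℝ V] [TopologicalSpace V]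
  [IsTopologicalAddGroup V] [ContinuousSMul ℝ V] {s : Set V} {x p : V}

theorem Convex.add_smul_sub_mem_intrinsicInterior (hs : Convex ℝ s) (hx : x ∈ s)
    (hp : p ∈ intrinsicInterior ℝ s) {t : ℝ} (ht : t ∈ Ioc 0 1) :
    x + t • (p - x) ∈ intrinsicInterior ℝ s := by
  rw [mem_intrinsicInterior_iff_mem_nhdsWithin] at hp ⊢
  obtain ⟨hpA, hsp⟩ := hp
  have hxA : x ∈ affineSpan ℝ s := subset_affineSpan ℝ s hx
  -- The homothety `g` undoes the contraction towards `x`, and `g ⁻¹' s ⊆ s` by convexity.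
  set g : V → V := fun q => x + t⁻¹ • (q - x)
  have hgA : ∀ q ∈ affineSpan ℝ s, g q ∈ affineSpan ℝ s := fun q hq => by
    simpa [g, add_comm] using AffineSubspace.smul_vsub_vadd_mem _ t⁻¹ hq hxA hxA
  have hgp : g (x + t • (p - x)) = p := by
    simp [g, smul_smul, inv_mul_cancel₀ ht.1.ne']
  refine ⟨by simpa [add_comm] using AffineSubspace.smul_vsub_vadd_mem _ t hpA hxA hxA, ?_⟩
  have hg : Tendsto g (𝓝[affineSpan ℝ s] (x + t • (p - x))) (𝓝[affineSpan ℝ s] p) := by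
    refine tendsto_nhdsWithin_iff.2 ⟨?_, eventually_nhdsWithin_of_forall hgA⟩
    have hcont := (show Continuous g by fun_prop).tendsto (x + t • (p - x))
    rw [hgp] at hcont
    exact hcont.mono_left nhdsWithin_le_nhds
  filter_upwards [hg hsp] with q hq
  have hq_eq : (1 - t) • x + t • g q = q := by
    simp only [g, smul_add, smul_smul, mul_inv_cancel₀ ht.1.ne']
    module
  exact hq_eq ▸ hs hx hq (by linarith [ht.2]) ht.1.le (by ring)

theorem exists_add_smul_sub_mem_of_mem_intrinsicInterior (hp : p ∈ intrinsicInterior ℝ s)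
    (hx : x ∈ s) : ∃ ε : ℝ, 0 < ε ∧ p + ε • (p - x) ∈ s := by
  rw [mem_intrinsicInterior_iff_mem_nhdsWithin] at hp
  obtain ⟨hpA, hsp⟩ := hp
  have hline : Tendsto (fun ε : ℝ => p + ε • (p - x)) (𝓝 0) (𝓝[affineSpan ℝ s] p) := by
    refine tendsto_nhdsWithin_iff.2 ⟨?_, Eventually.of_forall fun ε => ?_⟩
    · simpa using (Continuous.tendsto (by fun_prop : Continuous fun ε : ℝ => p + ε • (p - x)) 0)
    · simpa [add_comm] using
        AffineSubspace.smul_vsub_vadd_mem _ ε hpA (subset_affineSpan ℝ s hx) hpA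
  exact ((hline.mono_left (nhdsWithin_le_nhds (s := Ioi 0))).eventually hsp
    |>.and self_mem_nhdsWithin).exists.imp fun ε h => ⟨h.2, h.1⟩

theorem eq_of_isMaxOn_of_mem_intrinsicInterior (f : V →ₗ[ℝ] ℝ) (hp : p ∈ intrinsicInterior ℝ s)
    (hmax : IsMaxOn f s p) (hx : x ∈ s) : f x = f p := by
  obtain ⟨ε, hε, hεs⟩ := exists_add_smul_sub_mem_of_mem_intrinsicInterior hp hx
  have h : f (p + ε • (p - x)) ≤ f p := hmax hεs
  simp only [map_add, map_smul, map_sub, smul_eq_mul] at h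
  have hxp : f x ≤ f p := hmax hx
  nlinarith

theorem intrinsicInterior_inter_nonempty_of_zero_mem_intrinsicInterior_sub {X Y : Set V}
    (hX : Convex ℝ X) (hY : Convex ℝ Y) (hXne : (intrinsicInterior ℝ X).Nonempty)
    (hYne : (intrinsicInterior ℝ Y).Nonempty) (h0 : (0 : V) ∈ intrinsicInterior ℝ (X - Y)) :
    (intrinsicInterior ℝ X ∩ intrinsicInterior ℝ Y).Nonempty := by
  obtain ⟨a, ha⟩ := hXne
  obtain ⟨b, hb⟩ := hYne
  obtain ⟨ε, hε, hmem⟩ := exists_add_smul_sub_mem_of_mem_intrinsicInterior h0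
    (sub_mem_sub (intrinsicInterior_subset ha) (intrinsicInterior_subset hb))
  obtain ⟨x, hx, y, hy, hxy⟩ := mem_sub.1 hmem
  -- `x - y = ε • (b - a)`, so moving `x` towards `a` and `y` towards `b` by the fraction
  -- `ε / (1 + ε)` lands both at the same point.
  set t := ε / (1 + ε)
  have ht : t * (1 + ε) = ε := div_mul_cancel₀ ε (by positivity)
  have htI : t ∈ Ioc 0 1 := ⟨by positivity, (div_le_one (by positivity)).2 (by linarith)⟩
  have hx' : x = y + ε • (b - a) := by rw [← sub_eq_iff_eq_add', hxy]; module
  refine ⟨x + t • (a - x), hX.add_smul_sub_mem_intrinsicInterior hx ha htI, ?_⟩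
  convert hY.add_smul_sub_mem_intrinsicInterior hy hb htI using 1
  rw [hx']
  linear_combination (norm := module) ht • (a - b)

end TopologicalVectorSpace

theorem span_sub_le_span_image_sub_union {R M : Type*} [Ring R] [AddCommGroup M] [Module R M]
    (X Y : Set M) (z : M) :
    Submodule.span R (X - Y) ≤ Submodule.span R ((fun w => w - z) '' (X ∪ Y)) := by
  refine Submodule.span_le.2 fun d hd => ?_
  obtain ⟨x, hx, y, hy, rfl⟩ := mem_sub.1 hd
  rw [← sub_sub_sub_cancel_right x y z]
  exact sub_mem (Submodule.subset_span ⟨x, .inl hx, rfl⟩) (Submodule.subset_span ⟨y, .inr hy, rfl⟩)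

section InnerProductSpace

variable {F : Type*} [NormedAddCommGroup F] [InnerProductSpace ℝ F]

theorem exists_ne_zero_mem_span_inner_nonpos_of_zero_notMem_intrinsicInterior
    [FiniteDimensional ℝ F] {C : Set F} (hC : Convex ℝ C) (h0 : (0 : F) ∈ C)
    (h0' : (0 : F) ∉ intrinsicInterior ℝ C) :
    ∃ v ∈ Submodule.span ℝ C, v ≠ 0 ∧ ∀ c ∈ C, inner ℝ v c ≤ 0 := by
  set W := Submodule.span ℝ C
  set S : Set W := (↑) ⁻¹' C
  have hS : Convex ℝ S := hC.linear_preimage W.subtype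
  have h0S : (0 : W) ∈ S := h0
  have hSW : W.subtypeₗᵢ.toAffineIsometry '' S = C := by
    simp only [LinearIsometry.coe_toAffineIsometry, Submodule.coe_subtypeₗᵢ, S]
    exact image_preimage_eq_of_subset fun c hc => ⟨⟨c, Submodule.subset_span hc⟩, rfl⟩
  -- As `0 ∈ S`, the affine span of `S` is its linear span, which is all of `W`.
  have hint : (interior S).Nonempty := by
    rw [hS.interior_nonempty_iff_affineSpan_eq_top,
      AffineSubspace.affineSpan_eq_top_iff_vectorSpan_eq_top_of_nonempty ℝ W W ⟨0, h0S⟩,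
      vectorSpan_eq_span_vsub_set_right ℝ h0S]
    simp only [vsub_eq_sub, sub_zero, image_id']
    exact Submodule.span_span_coe_preimage
  have h0int : (0 : W) ∉ interior S := fun h => h0' <| by
    rw [← hSW, AffineIsometry.intrinsicInterior_image]
    exact ⟨0, interior_subset_intrinsicInterior h, rfl⟩
  obtain ⟨f, hf0, hf⟩ := geometric_hahn_banach_of_nonempty_interior_point hS h0int hint
  set v := (InnerProductSpace.toDual ℝ W).symm f
  refine ⟨v, v.2, by simpa [v] using hf0, fun c hc => ?_⟩
  have hfc : f ⟨c, Submodule.subset_span hc⟩ ≤ 0 := by simpa using hf _ hc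
  rwa [← InnerProductSpace.toDual_symm_apply, Submodule.coe_inner] at hfc

theorem exists_ne_zero_separating_of_intrinsicInterior_inter_eq_empty [FiniteDimensional ℝ F]
    {X Y : Set F} (hX : Convex ℝ X) (hY : Convex ℝ Y) {z : F} (hz : z ∈ X ∩ Y)
    (hXY : intrinsicInterior ℝ X ∩ intrinsicInterior ℝ Y = ∅) :
    ∃ v ∈ Submodule.span ℝ ((fun w => w - z) '' (X ∪ Y)), v ≠ 0 ∧
      (∀ x ∈ X, inner ℝ v (x - z) ≤ 0) ∧ ∀ y ∈ Y, 0 ≤ inner ℝ v (y - z) := by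
  have h0 : (0 : F) ∉ intrinsicInterior ℝ (X - Y) := fun h =>
    Nonempty.ne_empty (intrinsicInterior_inter_nonempty_of_zero_mem_intrinsicInterior_sub hX hY
      (Nonempty.intrinsicInterior hX ⟨z, hz.1⟩) (Nonempty.intrinsicInterior hY ⟨z, hz.2⟩) h) hXY
  obtain ⟨v, hvD, hv0, hv⟩ := exists_ne_zero_mem_span_inner_nonpos_of_zero_notMem_intrinsicInterior
    (hX.sub hY) ⟨z, hz.1, z, hz.2, sub_self z⟩ h0
  refine ⟨v, span_sub_le_span_image_sub_union X Y z hvD, hv0,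
    fun x hx => hv _ (sub_mem_sub hx hz.2), fun y hy => ?_⟩
  have hzy := hv _ (sub_mem_sub hz.1 hy)
  rw [← neg_sub, inner_neg_right] at hzy
  linarith

theorem inner_sub_eq_zero_of_separating_of_mem_intrinsicInterior {X Y : Set F} {v z p : F}
    (hpX : p ∈ intrinsicInterior ℝ X) (hpY : p ∈ intrinsicInterior ℝ Y)
    (hX : ∀ x ∈ X, inner ℝ v (x - z) ≤ 0) (hY : ∀ y ∈ Y, 0 ≤ inner ℝ v (y - z)) :
    ∀ w ∈ X ∪ Y, inner ℝ v (w - z) = 0 := by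
  simp only [inner_sub_right, sub_nonpos, sub_nonneg] at hX hY ⊢
  have hpz : inner ℝ v p = inner ℝ v z :=
    le_antisymm (hX p (intrinsicInterior_subset hpX)) (hY p (intrinsicInterior_subset hpY))
  rintro w (hw | hw) <;> rw [sub_eq_zero, ← hpz]
  · exact eq_of_isMaxOn_of_mem_intrinsicInterior (innerₛₗ ℝ v) hpX
      (fun x hx => (hX x hx).trans hpz.ge) hw
  · exact neg_inj.1 <| eq_of_isMaxOn_of_mem_intrinsicInterior (-innerₛₗ ℝ v) hpY
      (fun y hy => neg_le_neg (hpz.le.trans (hY y hy))) hw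

end InnerProductSpace

theorem relative_transversality_iff_relative_interiors_general {E : Type*} [NormedAddCommGroup E]
    [InnerProductSpace ℝ E] [FiniteDimensional ℝ E] (X Y : Set E)
    (hXv : Convex ℝ X) (hYv : Convex ℝ Y)
    (z : E) (hz : z ∈ X ∩ Y) :
    (∀ v ∈ Submodule.span ℝ ((fun w => w - z) '' (X ∪ Y)),
        (∀ x ∈ X, (inner ℝ v (x - z) : ℝ) ≤ 0) →
        (∀ y ∈ Y, (0:ℝ) ≤ inner ℝ v (y - z)) → v = 0)
      ↔ (intrinsicInterior ℝ X ∩ intrinsicInterior ℝ Y).Nonempty := by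
  constructor
  · intro htrans
    by_contra hXY
    obtain ⟨v, hv, hv0, hX, hY⟩ :=
      exists_ne_zero_separating_of_intrinsicInterior_inter_eq_empty hXv hYv hz
        (not_nonempty_iff_eq_empty.1 hXY)
    exact hv0 (htrans v hv hX hY)
  · rintro ⟨p, hpX, hpY⟩ v hv hX hY
    have hker : Submodule.span ℝ ((fun w => w - z) '' (X ∪ Y)) ≤ LinearMap.ker (innerₛₗ ℝ v) :=
      Submodule.span_le.2 <| by
        rintro _ ⟨w, hw, rfl⟩
        exact inner_sub_eq_zero_of_separating_of_mem_intrinsicInterior hpX hpY hX hY w hw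
    exact inner_self_eq_zero.1 (hker hv)

theorem relative_transversality_iff_relative_interiors {E : Type*} [NormedAddCommGroup E]
    [InnerProductSpace ℝ E] [FiniteDimensional ℝ E] (X Y : Set E)
    (hXc : IsClosed X) (hYc : IsClosed Y) (hXv : Convex ℝ X) (hYv : Convex ℝ Y)
    (z : E) (hz : z ∈ X ∩ Y) :
    (∀ v ∈ Submodule.span ℝ ((fun w => w - z) '' (X ∪ Y)),
        (∀ x ∈ X, (inner ℝ v (x - z) : ℝ) ≤ 0) →
        (∀ y ∈ Y, (0:ℝ) ≤ inner ℝ v (y - z)) → v = 0)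
      ↔ (intrinsicInterior ℝ X ∩ intrinsicInterior ℝ Y).Nonempty :=
  relative_transversality_iff_relative_interiors_general X Y hXv hYv z hz
end
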